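/- Let α ∈ [0,1), α₂ > 0, Δt > 0, t_j = jΔt, and m ≥ 1. Then Δt · Σ_{j=1}^m t_{m-j+1}^{-α} t_j^{-1+α₂} ≤ C_{α,α₂} t_m^{-α+α₂}, with C_{α,α₂} depending only on α and α₂. -/

import Mathlib

open Real Finset

/-!
Since `(m - j + 1) + j = m + 1`, in every term of the sum one of the two bases lies in
`[m/2, m]`, so its power is comparable to the same power of `m`. What is left is a power sum
`∑_{j ≤ m} j ^ r` with `r > -1`, which is `O(m ^ (r + 1))`: for `r ≤ 0` by telescoping Bernoulli's
inequality `(r + 1) j ^ r ≤ j ^ (r + 1) - (j - 1) ^ (r + 1)`. The powers of `Δt` factor out by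
homogeneity.
-/

theorem Real.mul_rpow_sub_one_le_rpow_sub_rpow {s x : ℝ} (hs0 : 0 ≤ s) (hs1 : s ≤ 1)
    (hx : 1 ≤ x) : s * x ^ (s - 1) ≤ x ^ s - (x - 1) ^ s := by
  have hx0 : 0 < x := by linarith
  have h1x : 0 ≤ 1 + -1 / x := by
    rw [neg_div, ← sub_eq_add_neg, sub_nonneg]; exact div_le_one_of_le₀ hx hx0.le
  have hbern := rpow_one_add_le_one_add_mul_self (by linarith) hs0 hs1 (s := -1 / x)
  have hsub : (1 + -1 / x) ^ s * x ^ s = (x - 1) ^ s := by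
    rw [← mul_rpow h1x hx0.le]; congr 1; field_simp; ring
  calc s * x ^ (s - 1) = x ^ s - (1 + s * (-1 / x)) * x ^ s := by
        rw [rpow_sub_one hx0.ne']; field_simp; ring
    _ ≤ x ^ s - (x - 1) ^ s := by
        rw [← hsub]; gcongr

theorem sum_Icc_rpow_le_of_nonpos {q : ℝ} (hq : -1 < q) (hq0 : q ≤ 0) (m : ℕ) :
    ∑ j ∈ Icc 1 m, (j : ℝ) ^ q ≤ (m : ℝ) ^ (q + 1) / (q + 1) := by
  have hq1 : 0 < q + 1 := by linarith
  induction m with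
  | zero => simp [zero_rpow hq1.ne']
  | succ m ih =>
    have key := mul_rpow_sub_one_le_rpow_sub_rpow hq1.le (by linarith)
      (by exact_mod_cast Nat.le_add_left 1 m : (1 : ℝ) ≤ ((m + 1 : ℕ) : ℝ))
    rw [add_sub_cancel_right, Nat.cast_succ, add_sub_cancel_right] at key
    rw [sum_Icc_succ_top (by omega), Nat.cast_succ]
    calc ∑ j ∈ Icc 1 m, (j : ℝ) ^ q + ((m : ℝ) + 1) ^ q
        ≤ (m : ℝ) ^ (q + 1) / (q + 1) + ((m : ℝ) + 1) ^ q := by gcongr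
      _ ≤ ((m : ℝ) + 1) ^ (q + 1) / (q + 1) := by
        rw [div_add' _ _ _ hq1.ne', div_le_div_iff_of_pos_right hq1]; linarith

theorem sum_Icc_rpow_le {q : ℝ} (hq : -1 < q) (m : ℕ) :
    ∑ j ∈ Icc 1 m, (j : ℝ) ^ q ≤ max 1 (1 / (q + 1)) * (m : ℝ) ^ (q + 1) := by
  rcases le_or_gt q 0 with hq0 | hq0
  · calc ∑ j ∈ Icc 1 m, (j : ℝ) ^ q ≤ 1 / (q + 1) * (m : ℝ) ^ (q + 1) := by
          rw [one_div_mul_eq_div]; exact sum_Icc_rpow_le_of_nonpos hq hq0 m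
      _ ≤ _ := by gcongr; exact le_max_right _ _
  · calc ∑ j ∈ Icc 1 m, (j : ℝ) ^ q ≤ ∑ _j ∈ Icc 1 m, (m : ℝ) ^ q := by
          gcongr with j hj; exact_mod_cast (mem_Icc.mp hj).2
      _ = 1 * (m : ℝ) ^ (q + 1) := by
          rw [sum_const, Nat.card_Icc, add_tsub_cancel_right, nsmul_eq_mul, one_mul,
            rpow_add_one' (Nat.cast_nonneg m) (by linarith), mul_comm]
      _ ≤ _ := by gcongr; exact le_max_left _ _

theorem rpow_le_two_rpow_abs_mul_rpow {x y : ℝ} (p : ℝ) (hy : 0 < y) (hyx : y / 2 ≤ x)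
    (hxy : x ≤ y) : x ^ p ≤ 2 ^ |p| * y ^ p := by
  rcases le_or_gt 0 p with hp | hp
  · calc x ^ p ≤ y ^ p := by gcongr; linarith
      _ ≤ 2 ^ |p| * y ^ p :=
          le_mul_of_one_le_left (by positivity) (one_le_rpow one_le_two (abs_nonneg p))
  · calc x ^ p ≤ (y / 2) ^ p := rpow_le_rpow_of_nonpos (by positivity) hyx hp.le
      _ = 2 ^ |p| * y ^ p := by
          rw [div_rpow hy.le zero_le_two, abs_of_neg hp, rpow_neg zero_le_two]; ring

theorem rpow_mul_rpow_le_of_le_add {x y m : ℝ} (p q : ℝ) (hx : 0 ≤ x) (hy : 0 ≤ y) (hm : 0 < m)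
    (hxm : x ≤ m) (hym : y ≤ m) (hmxy : m ≤ x + y) :
    x ^ p * y ^ q ≤ 2 ^ |p| * m ^ p * y ^ q + 2 ^ |q| * m ^ q * x ^ p := by
  rcases le_total (m / 2) x with hx2 | hx2
  · calc x ^ p * y ^ q ≤ 2 ^ |p| * m ^ p * y ^ q := by
          gcongr; exact rpow_le_two_rpow_abs_mul_rpow p hm hx2 hxm
      _ ≤ _ := le_add_of_nonneg_right (by positivity)
  · calc x ^ p * y ^ q ≤ 2 ^ |q| * m ^ q * x ^ p := by
          rw [mul_comm]; gcongr; exact rpow_le_two_rpow_abs_mul_rpow q hm (by linarith) hym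
      _ ≤ _ := le_add_of_nonneg_left (by positivity)

theorem Finset.sum_Icc_one_reflect {M : Type*} [AddCommMonoid M] (f : ℕ → M) (m : ℕ) :
    ∑ j ∈ Icc 1 m, f (m - j + 1) = ∑ j ∈ Icc 1 m, f j := by
  refine sum_nbij' (fun j ↦ m - j + 1) (fun j ↦ m - j + 1) ?_ ?_ ?_ ?_ fun _ _ ↦ rfl <;>
    intro j hj <;> grind

theorem sum_Icc_rpow_mul_rpow_le {p q : ℝ} (hp : -1 < p) (hq : -1 < q) {m : ℕ} (hm : 1 ≤ m) :
    ∑ j ∈ Icc 1 m, ((m - j + 1 : ℕ) : ℝ) ^ p * (j : ℝ) ^ q ≤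
      (2 ^ |p| * max 1 (1 / (q + 1)) + 2 ^ |q| * max 1 (1 / (p + 1))) * (m : ℝ) ^ (p + q + 1) := by
  have hm0 : (0 : ℝ) < m := by exact_mod_cast hm
  have hpq : (m : ℝ) ^ p * (m : ℝ) ^ (q + 1) = (m : ℝ) ^ (p + q + 1) := by
    rw [← rpow_add hm0, add_assoc]
  have hqp : (m : ℝ) ^ q * (m : ℝ) ^ (p + 1) = (m : ℝ) ^ (p + q + 1) := by
    rw [← rpow_add hm0]; ring_nf
  calc ∑ j ∈ Icc 1 m, ((m - j + 1 : ℕ) : ℝ) ^ p * (j : ℝ) ^ q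
      ≤ ∑ j ∈ Icc 1 m, (2 ^ |p| * (m : ℝ) ^ p * (j : ℝ) ^ q
          + 2 ^ |q| * (m : ℝ) ^ q * ((m - j + 1 : ℕ) : ℝ) ^ p) := by
        gcongr with j hj
        obtain ⟨hj1, hjm⟩ := mem_Icc.mp hj
        exact rpow_mul_rpow_le_of_le_add p q (Nat.cast_nonneg _) (Nat.cast_nonneg _) hm0
          (by exact_mod_cast (by omega : m - j + 1 ≤ m)) (by exact_mod_cast hjm)
          (by exact_mod_cast (by omega : m ≤ m - j + 1 + j))
    _ = 2 ^ |p| * (m : ℝ) ^ p * ∑ j ∈ Icc 1 m, (j : ℝ) ^ q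
          + 2 ^ |q| * (m : ℝ) ^ q * ∑ j ∈ Icc 1 m, (j : ℝ) ^ p := by
        rw [sum_add_distrib, ← mul_sum, ← mul_sum, sum_Icc_one_reflect (fun j ↦ (j : ℝ) ^ p)]
    _ ≤ 2 ^ |p| * (m : ℝ) ^ p * (max 1 (1 / (q + 1)) * (m : ℝ) ^ (q + 1))
          + 2 ^ |q| * (m : ℝ) ^ q * (max 1 (1 / (p + 1)) * (m : ℝ) ^ (p + 1)) := by
        gcongr
        · exact sum_Icc_rpow_le hq m
        · exact sum_Icc_rpow_le hp m
    _ = _ := by linear_combination (2 ^ |p| * max 1 (1 / (q + 1))) * hpq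
          + (2 ^ |q| * max 1 (1 / (p + 1))) * hqp

theorem stmt_5_general (α α₂ : ℝ) (hα1 : α < 1) (h2 : 0 < α₂) :
    ∃ C : ℝ, 0 < C ∧ ∀ (Δt : ℝ) (m : ℕ), 0 < Δt → 1 ≤ m →
      Δt * ∑ j ∈ Finset.Icc 1 m,
        (((m - j + 1 : ℕ) : ℝ) * Δt) ^ (-α) * (((j : ℕ) : ℝ) * Δt) ^ (-1 + α₂)
      ≤ C * ((m : ℝ) * Δt) ^ (-α + α₂) := by
  refine ⟨2 ^ |-α| * max 1 (1 / (-1 + α₂ + 1)) + 2 ^ |-1 + α₂| * max 1 (1 / (-α + 1)),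
    by positivity, fun Δt m hΔt hm ↦ ?_⟩
  have hsplit (a b : ℕ) : ((a : ℝ) * Δt) ^ (-α) * ((b : ℝ) * Δt) ^ (-1 + α₂)
      = Δt ^ (-α) * Δt ^ (-1 + α₂) * ((a : ℝ) ^ (-α) * (b : ℝ) ^ (-1 + α₂)) := by
    rw [mul_rpow (Nat.cast_nonneg a) hΔt.le, mul_rpow (Nat.cast_nonneg b) hΔt.le]; ring
  have hΔt_pow : Δt * (Δt ^ (-α) * Δt ^ (-1 + α₂)) = Δt ^ (-α + α₂) := by
    rw [← rpow_add hΔt, mul_comm, ← rpow_add_one hΔt.ne']; ring_nf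
  have hsum := sum_Icc_rpow_mul_rpow_le (by linarith : -1 < -α) (by linarith : -1 < -1 + α₂) hm
  rw [show -α + (-1 + α₂) + 1 = -α + α₂ by ring] at hsum
  simp_rw [hsplit]
  rw [← mul_sum, ← mul_assoc, hΔt_pow, mul_rpow (Nat.cast_nonneg m) hΔt.le]
  calc Δt ^ (-α + α₂) * _ ≤ Δt ^ (-α + α₂) * (_ * (m : ℝ) ^ (-α + α₂)) := by gcongr
    _ = _ := by ring

theorem stmt_5 (α α₂ : ℝ) (hα0 : 0 ≤ α) (hα1 : α < 1) (h2 : 0 < α₂) :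
    ∃ C : ℝ, 0 < C ∧ ∀ (Δt : ℝ) (m : ℕ), 0 < Δt → 1 ≤ m →
      Δt * ∑ j ∈ Finset.Icc 1 m,
        (((m - j + 1 : ℕ) : ℝ) * Δt) ^ (-α) * (((j : ℕ) : ℝ) * Δt) ^ (-1 + α₂)
      ≤ C * ((m : ℝ) * Δt) ^ (-α + α₂) :=
  stmt_5_general α α₂ hα1 h2
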